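/- arXiv:1007.0683 — 2 statements merged into one kernel-verified Lean document; each statement's English description precedes it below -/
import Mathlib

section
/- Let n_X^i (for X ∈ S and 1 ≤ i ≤ τ_X) be nonnegative integers such that n_X^i ≤ T/τ_X for all X and i, and Σ_{X∈S} Σ_{i=1}^{τ_X} n_X^i ≤ T. Then there exists a schedule of one frame, i.e., a function σ : {0,…,T−1} → Option S, such that for every task X ∈ S: Σ_{p=0}^{T/τ_X − 1} Σ_{i=1}^{m_X(p)} r_X^i ≥ Σ_{i=1}^{τ_X} n_X^i r_X^i, where m_X(p) denotes the number of slots t in the p-th period [pτ_X, (p+1)τ_X) of X with σ(t) = X. -/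
/-!
Put `c_X = ∑ᵢ n_X^i` and `P_X = T / τ_X`. It suffices to run `X` in each of its periods
`⌊c_X / P_X⌋` times, and once more in `c_X mod P_X` marked periods: then, for every `i`, at least
`∑_{j ≤ i} n_X^j` executions are among the first `i` of their period (since `n_X^j ≤ P_X`), and
Abel summation against the decreasing rewards gives the bound.

Slots are assigned by Hall's theorem, whose condition says that no set `A` of slots contains the
periods of more required executions than `|A|`. The marks are placed one at a time, keeping this
condition for a demand that also counts the executions that the marks still to be placed will
force into `A`. Initially it holds by averaging (`∑ c_X ≤ T`). The demand is supermodular, so the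
tight sets that force no further mark of `Y` into themselves are closed under union, and the next
mark of `Y` goes into a period that the largest of them does not cover.
-/

def execCount {S : Type*} [DecidableEq S] (τ : S → ℕ) (σ : ℕ → Option S)
    (X : S) (p : ℕ) : ℕ :=
  ((Finset.Ico (p * τ X) ((p + 1) * τ X)).filter (fun t => σ t = some X)).card

namespace PeriodicSchedule

open Finset

def period (d p : ℕ) : Finset ℕ := Ico (p * d) ((p + 1) * d)

lemma card_period (d p : ℕ) : #(period d p) = d := by
  simp [period, add_mul]

lemma disjoint_period (d : ℕ) {p q : ℕ} (hpq : p ≠ q) : Disjoint (period d p) (period d q) := by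
  wlog h : p < q generalizing p q
  · exact (this hpq.symm (by omega)).symm
  have : (p + 1) * d ≤ q * d := Nat.mul_le_mul_right _ h
  simp only [period, disjoint_left, mem_Ico]
  omega

lemma period_subset_range {d p P : ℕ} (hp : p < P) : period d p ⊆ range (P * d) := by
  intro t ht
  have : (p + 1) * d ≤ P * d := Nat.mul_le_mul_right _ hp
  simp only [period, mem_Ico, mem_range] at ht ⊢
  omega

lemma execCount_le {S : Type*} [DecidableEq S] (τ : S → ℕ) (σ : ℕ → Option S) (X : S) (p : ℕ) :
    execCount τ σ X p ≤ τ X :=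
  (card_filter_le _ _).trans (card_period (τ X) p).le

section Covered

variable (d : ℕ) (Q : Finset ℕ) {A B : Finset ℕ}

def coveredPeriods (A : Finset ℕ) : Finset ℕ := {p ∈ Q | period d p ⊆ A}

lemma card_coveredPeriods_mono (h : A ⊆ B) :
    #(coveredPeriods d Q A) ≤ #(coveredPeriods d Q B) :=
  card_le_card fun _ hp => by
    simp only [coveredPeriods, mem_filter] at hp ⊢
    exact ⟨hp.1, hp.2.trans h⟩

lemma card_coveredPeriods_supermodular :
    #(coveredPeriods d Q A) + #(coveredPeriods d Q B) ≤
      #(coveredPeriods d Q (A ∪ B)) + #(coveredPeriods d Q (A ∩ B)) := by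
  rw [← card_union_add_card_inter]
  refine add_le_add (card_le_card ?_) (le_of_eq (congrArg card ?_))
  · intro p
    simp only [coveredPeriods, mem_union, mem_filter]
    rintro (⟨hp, hA⟩ | ⟨hp, hB⟩)
    exacts [⟨hp, hA.trans subset_union_left⟩, ⟨hp, hB.trans subset_union_right⟩]
  · ext p
    simp only [coveredPeriods, mem_inter, mem_filter, subset_inter_iff]
    tauto

lemma card_coveredPeriods_mul_le : #(coveredPeriods d Q A) * d ≤ #A := by
  calc #(coveredPeriods d Q A) * d
      = #((coveredPeriods d Q A).biUnion (period d)) := by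
        rw [card_biUnion fun p _ q _ hpq => disjoint_period d hpq]
        simp [card_period]
    _ ≤ #A := card_le_card <| biUnion_subset.2 fun p hp => (mem_filter.1 hp).2

lemma card_coveredPeriods_insert {p : ℕ} (hp : p ∉ Q) (A : Finset ℕ) :
    #(coveredPeriods d (insert p Q) A) =
      #(coveredPeriods d Q A) + if period d p ⊆ A then 1 else 0 := by
  unfold coveredPeriods
  rw [filter_insert]
  split_ifs
  · exact card_insert_of_notMem fun h => hp (mem_filter.1 h).1
  · rfl

end Covered

lemma sum_apply_update_add {ι α M : Type*} [Fintype ι] [DecidableEq ι] [AddCommMonoid M]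
    (f : ι → α → M) (g : ι → α) (i : ι) (a : α) :
    ∑ j, f j (Function.update g i a j) + f i (g i) = ∑ j, f j (g j) + f i a := by
  simp_rw [Function.apply_update f g]
  rw [sum_update_of_mem (mem_univ i), sdiff_singleton_eq_erase,
    ← add_sum_erase univ (fun j => f j (g j)) (mem_univ i)]
  abel

section Schedule

variable {S : Type*} [Fintype S] (τ P : S → ℕ)

lemma card_filter_period_subset (m : S → ℕ → ℕ) (A : Finset ℕ) :
    #{i : Σ X, Σ p : Fin (P X), Fin (m X p) | period (τ i.1) i.2.1 ⊆ A} =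
      ∑ X, ∑ p ∈ coveredPeriods (τ X) (range (P X)) A, m X p := by
  rw [card_filter, Fintype.sum_sigma]
  refine sum_congr rfl fun X _ => ?_
  rw [Fintype.sum_sigma, coveredPeriods, sum_filter, ← Fin.sum_univ_eq_sum_range]
  refine sum_congr rfl fun p _ => ?_
  split_ifs <;> simp

variable [DecidableEq S]

theorem exists_schedule_of_hall {T : ℕ} (hPτ : ∀ X, P X * τ X ≤ T) (m : S → ℕ → ℕ)
    (hall : ∀ A ⊆ range T, ∑ X, ∑ p ∈ coveredPeriods (τ X) (range (P X)) A, m X p ≤ #A) :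
    ∃ σ : ℕ → Option S, ∀ X, ∀ p < P X, m X p ≤ execCount τ σ X p := by
  let slots : (Σ X, Σ p : Fin (P X), Fin (m X p)) → Finset ℕ := fun i => period (τ i.1) i.2.1
  obtain ⟨f, hf_inj, hf_mem⟩ :=
    (all_card_le_biUnion_card_iff_exists_injective slots).1 fun s => by
      have hA : s.biUnion slots ⊆ range T := biUnion_subset.2 fun i _ =>
        (period_subset_range i.2.1.isLt).trans (range_subset_range.2 (hPτ i.1))
      calc #s ≤ #{i | slots i ⊆ s.biUnion slots} :=
            card_le_card fun i hi => mem_filter.2 ⟨mem_univ _, subset_biUnion_of_mem slots hi⟩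
        _ = _ := card_filter_period_subset τ P m _
        _ ≤ _ := hall _ hA
  refine ⟨fun t => (Function.partialInv f t).map Sigma.fst, fun X p hp => ?_⟩
  calc m X p = #(univ : Finset (Fin (m X p))) := by simp
    _ ≤ execCount τ _ X p := card_le_card_of_injOn (fun j => f ⟨X, ⟨p, hp⟩, j⟩) ?_ ?_
  · intro j _
    have := hf_mem ⟨X, ⟨p, hp⟩, j⟩
    simpa [execCount, slots, period, Function.partialInv_left hf_inj] using this
  · intro j _ k _ h
    simpa using hf_inj h

end Schedule

section Marks

variable {S : Type*} (τ P c : S → ℕ)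

/-- If the marks `e ⊆ range (P X)` are completed to `c X % P X` marks by marking further
periods, at least this many of the new marks fall in periods covered by `A`. -/
def forcedExtras (X : S) (e A : Finset ℕ) : ℕ :=
  c X % P X + #(coveredPeriods (τ X) (range (P X) \ e) A) - P X

def taskDemand (X : S) (e A : Finset ℕ) : ℕ :=
  c X / P X * #(coveredPeriods (τ X) (range (P X)) A) + #(coveredPeriods (τ X) e A) +
    forcedExtras τ P c X e A

variable {τ P c} {T : ℕ}

lemma forcedExtras_supermodular (X : S) (e A B : Finset ℕ) :
    forcedExtras τ P c X e A + forcedExtras τ P c X e B ≤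
      forcedExtras τ P c X e (A ∪ B) + forcedExtras τ P c X e (A ∩ B) := by
  have := card_coveredPeriods_supermodular (τ X) (range (P X) \ e) (A := A) (B := B)
  have := card_coveredPeriods_mono (τ X) (range (P X) \ e) (inter_subset_left : A ∩ B ⊆ A)
  have := card_coveredPeriods_mono (τ X) (range (P X) \ e) (inter_subset_right : A ∩ B ⊆ B)
  unfold forcedExtras
  omega

lemma taskDemand_supermodular (X : S) (e A B : Finset ℕ) :
    taskDemand τ P c X e A + taskDemand τ P c X e B ≤
      taskDemand τ P c X e (A ∪ B) + taskDemand τ P c X e (A ∩ B) := by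
  have := Nat.mul_le_mul_left (c X / P X)
    (card_coveredPeriods_supermodular (τ X) (range (P X)) (A := A) (B := B))
  have := card_coveredPeriods_supermodular (τ X) e (A := A) (B := B)
  have := forcedExtras_supermodular (τ := τ) (P := P) (c := c) X e A B
  unfold taskDemand
  rw [Nat.mul_add, Nat.mul_add] at *
  omega

lemma taskDemand_insert_le {X : S} {e : Finset ℕ} {p : ℕ} (hp : p ∈ range (P X) \ e)
    (A : Finset ℕ) :
    taskDemand τ P c X (insert p e) A ≤ taskDemand τ P c X e A +
      if period (τ X) p ⊆ A ∧ forcedExtras τ P c X e A = 0 then 1 else 0 := by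
  have hmarked := card_coveredPeriods_insert (τ X) e (mem_sdiff.1 hp).2 A
  have hfree := card_coveredPeriods_insert (τ X) _ (notMem_erase p (range (P X) \ e)) A
  rw [insert_erase hp, ← sdiff_insert] at hfree
  unfold taskDemand forcedExtras
  by_cases hpA : period (τ X) p ⊆ A
  · simp only [hpA, if_true, true_and] at hmarked hfree ⊢
    split_ifs <;> omega
  · simp only [hpA, if_false, false_and] at hmarked hfree ⊢
    omega

lemma taskDemand_empty_mul_le {X : S} (hPτ : P X * τ X = T) (hP : 0 < P X) (A : Finset ℕ) :
    taskDemand τ P c X ∅ A * T ≤ c X * #A := by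
  set q := #(coveredPeriods (τ X) (range (P X)) A) with hq
  have hqP : q ≤ P X := (card_filter_le _ _).trans (card_range _).le
  have hdiv := Nat.div_add_mod (c X) (P X)
  have hmod := Nat.mod_lt (c X) hP
  have hfluid : P X * taskDemand τ P c X ∅ A ≤ c X * q := by
    have hempty : #(coveredPeriods (τ X) ∅ A) = 0 := by simp [coveredPeriods]
    simp only [taskDemand, forcedExtras, sdiff_empty, hempty, add_zero, ← hq]
    generalize c X / P X = β at hdiv ⊢
    generalize c X % P X = s at hdiv hmod ⊢
    rw [← hdiv]
    rcases le_total (s + q) (P X) with h | h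
    · rw [Nat.sub_eq_zero_of_le h]
      nlinarith
    · obtain ⟨k, hk⟩ := Nat.exists_eq_add_of_le h
      rw [hk, Nat.add_sub_cancel_left]
      -- `P k ≤ s q` is `(P - s) (P - q) ≥ 0`
      nlinarith [Nat.mul_le_mul (Nat.sub_le_sub_left hmod.le (P X)) (Nat.sub_le_sub_left hqP (P X))]
  calc taskDemand τ P c X ∅ A * T = P X * taskDemand τ P c X ∅ A * τ X := by rw [← hPτ]; ring
    _ ≤ c X * q * τ X := Nat.mul_le_mul_right _ hfluid
    _ ≤ c X * #A := by
      rw [mul_assoc]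
      exact Nat.mul_le_mul_left _ (card_coveredPeriods_mul_le _ _)

variable [Fintype S]

variable (τ P c) in
def demand (E : S → Finset ℕ) (A : Finset ℕ) : ℕ :=
  ∑ X, taskDemand τ P c X (E X) A

variable (τ P c) in
def HallFeasible (T : ℕ) (E : S → Finset ℕ) : Prop :=
  ∀ A ⊆ range T, demand τ P c E A ≤ #A

lemma demand_supermodular (E : S → Finset ℕ) (A B : Finset ℕ) :
    demand τ P c E A + demand τ P c E B ≤ demand τ P c E (A ∪ B) + demand τ P c E (A ∩ B) := by
  simp only [demand, ← sum_add_distrib]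
  exact sum_le_sum fun X _ => taskDemand_supermodular X (E X) A B

variable {E : S → Finset ℕ} {A B : Finset ℕ}

lemma demand_union_inter_eq_card (hE : HallFeasible τ P c T E) (hA : A ⊆ range T) (hB : B ⊆ range T)
    (tA : demand τ P c E A = #A) (tB : demand τ P c E B = #B) :
    demand τ P c E (A ∪ B) = #(A ∪ B) ∧ demand τ P c E (A ∩ B) = #(A ∩ B) := by
  have := demand_supermodular (τ := τ) (P := P) (c := c) E A B
  have := hE _ (union_subset hA hB)
  have := hE (A ∩ B) (inter_subset_left.trans hA)
  have := card_union_add_card_inter A B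
  omega

lemma forcedExtras_union_eq_zero (hE : HallFeasible τ P c T E) (hA : A ⊆ range T)
    (hB : B ⊆ range T) (tA : demand τ P c E A = #A) (tB : demand τ P c E B = #B) {Y : S}
    (fA : forcedExtras τ P c Y (E Y) A = 0) (fB : forcedExtras τ P c Y (E Y) B = 0) :
    forcedExtras τ P c Y (E Y) (A ∪ B) = 0 := by
  obtain ⟨tU, tI⟩ := demand_union_inter_eq_card hE hA hB tA tB
  have hY : taskDemand τ P c Y (E Y) A + taskDemand τ P c Y (E Y) B =
      taskDemand τ P c Y (E Y) (A ∪ B) + taskDemand τ P c Y (E Y) (A ∩ B) := by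
    refine (sum_eq_sum_iff_of_le fun X _ => taskDemand_supermodular X (E X) A B).1 ?_ Y
      (mem_univ Y)
    simp only [sum_add_distrib]
    have := card_union_add_card_inter A B
    unfold demand at tA tB tU tI
    omega
  have := Nat.mul_le_mul_left (c Y / P Y)
    (card_coveredPeriods_supermodular (τ Y) (range (P Y)) (A := A) (B := B))
  have := card_coveredPeriods_supermodular (τ Y) (E Y) (A := A) (B := B)
  unfold taskDemand at hY
  rw [Nat.mul_add, Nat.mul_add] at *
  omega

lemma exists_maximal_tight (hE : HallFeasible τ P c T E) (Y : S) :
    ∃ M, forcedExtras τ P c Y (E Y) M = 0 ∧ ∀ A ⊆ range T,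
      demand τ P c E A = #A → forcedExtras τ P c Y (E Y) A = 0 → A ⊆ M := by
  classical
  let IsTight A := A ⊆ range T ∧ demand τ P c E A = #A ∧ forcedExtras τ P c Y (E Y) A = 0
  have hsup : IsTight (((range T).powerset.filter IsTight).sup id) := by
    refine sup_induction ?_ (fun A hA B hB => ?_) fun A hA => (mem_filter.1 hA).2
    · rw [bot_eq_empty]
      have h0 : demand τ P c E ∅ = 0 := Nat.le_zero.1 (hE ∅ (empty_subset _))
      have : forcedExtras τ P c Y (E Y) ∅ ≤ demand τ P c E ∅ :=
        le_add_self.trans (single_le_sum (f := fun X => taskDemand τ P c X (E X) ∅)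
          (fun _ _ => Nat.zero_le _) (mem_univ Y))
      exact ⟨empty_subset _, h0, by omega⟩
    · exact ⟨union_subset hA.1 hB.1, (demand_union_inter_eq_card hE hA.1 hB.1 hA.2.1 hB.2.1).1,
        forcedExtras_union_eq_zero hE hA.1 hB.1 hA.2.1 hB.2.1 hA.2.2 hB.2.2⟩
  exact ⟨_, hsup.2.2, fun A hA tA fA =>
    le_sup (f := id) (mem_filter.2 ⟨mem_powerset.2 hA, hA, tA, fA⟩)⟩

lemma hallFeasible_empty (hPτ : ∀ X, P X * τ X = T) (hT : 0 < T) (hc : ∑ X, c X ≤ T) :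
    HallFeasible τ P c T fun _ => ∅ := by
  intro A _
  have hP X : 0 < P X := Nat.pos_of_mul_pos_right ((hPτ X).symm ▸ hT)
  refine Nat.le_of_mul_le_mul_right ?_ hT
  calc demand τ P c (fun _ => ∅) A * T = ∑ X, taskDemand τ P c X ∅ A * T := sum_mul _ _ _
    _ ≤ ∑ X, c X * #A := sum_le_sum fun X _ => taskDemand_empty_mul_le (hPτ X) (hP X) A
    _ = (∑ X, c X) * #A := (sum_mul _ _ _).symm
    _ ≤ #A * T := by rw [mul_comm]; exact Nat.mul_le_mul_left _ hc

variable [DecidableEq S]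

lemma hallFeasible_update_insert (hE : HallFeasible τ P c T E) {Y : S}
    (hEY : E Y ⊆ range (P Y)) (hlt : #(E Y) < c Y % P Y) :
    ∃ p ∈ range (P Y) \ E Y, HallFeasible τ P c T (Function.update E Y (insert p (E Y))) := by
  obtain ⟨M, hM, hmax⟩ := exists_maximal_tight hE Y
  obtain ⟨p, hp, hpM⟩ : ∃ p ∈ range (P Y) \ E Y, ¬period (τ Y) p ⊆ M := by
    by_contra! h
    have hcov : coveredPeriods (τ Y) (range (P Y) \ E Y) M = range (P Y) \ E Y :=
      filter_true_of_mem h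
    unfold forcedExtras at hM
    rw [hcov, card_sdiff_of_subset hEY, card_range] at hM
    omega
  refine ⟨p, hp, fun A hA => ?_⟩
  have hupdate := sum_apply_update_add (fun X e => taskDemand τ P c X e A) E Y (insert p (E Y))
  have hinsert := taskDemand_insert_le (τ := τ) (P := P) (c := c) hp A
  have hfeas := hE A hA
  change demand τ P c _ A + _ = demand τ P c E A + _ at hupdate
  split_ifs at hinsert with hpA
  · have : demand τ P c E A ≠ #A := fun tA => hpM (hpA.1.trans (hmax A hA tA hpA.2))
    omega
  · omega

theorem exists_hallFeasible_marks (hPτ : ∀ X, P X * τ X = T) (hT : 0 < T)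
    (hc : ∑ X, c X ≤ T) :
    ∃ E : S → Finset ℕ, (∀ X, E X ⊆ range (P X)) ∧ (∀ X, #(E X) = c X % P X) ∧
      HallFeasible τ P c T E := by
  have grow : ∀ k ≤ ∑ X, c X % P X, ∃ E : S → Finset ℕ, (∀ X, E X ⊆ range (P X)) ∧
      (∀ X, #(E X) ≤ c X % P X) ∧ ∑ X, #(E X) = k ∧ HallFeasible τ P c T E := by
    intro k
    induction k with
    | zero => exact fun _ => ⟨fun _ => ∅, fun _ => empty_subset _, fun _ => by simp, by simp,
        hallFeasible_empty hPτ hT hc⟩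
    | succ k ih =>
      intro hk
      obtain ⟨E, hEP, hEc, hEk, hE⟩ := ih (by omega)
      obtain ⟨Y, -, hY⟩ : ∃ Y ∈ univ, #(E Y) < c Y % P Y := exists_lt_of_sum_lt (by omega)
      obtain ⟨p, hp, hE'⟩ := hallFeasible_update_insert hE (hEP Y) hY
      obtain ⟨hpP, hpE⟩ := mem_sdiff.1 hp
      have hcard := sum_apply_update_add (fun _ e => #e) E Y (insert p (E Y))
      rw [card_insert_of_notMem hpE] at hcard
      refine ⟨_, fun X => ?_, fun X => ?_, by omega, hE'⟩ <;>
        rcases eq_or_ne X Y with rfl | hXY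
      · simpa using insert_subset hpP (hEP X)
      · simpa [hXY] using hEP X
      · simpa [card_insert_of_notMem hpE] using hY
      · simpa [hXY] using hEc X
  obtain ⟨E, hEP, hEc, hsum, hE⟩ := grow _ le_rfl
  exact ⟨E, hEP, fun X => (sum_eq_sum_iff_of_le fun X _ => hEc X).1 hsum X (mem_univ X), hE⟩

theorem exists_balanced_schedule (hPτ : ∀ X, P X * τ X = T) (hT : 0 < T)
    (hc : ∑ X, c X ≤ T) :
    ∃ σ : ℕ → Option S, ∀ X, ∃ e ⊆ range (P X), #e = c X % P X ∧
      ∀ p < P X, c X / P X + (if p ∈ e then 1 else 0) ≤ execCount τ σ X p := by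
  obtain ⟨E, hEP, hEc, hE⟩ := exists_hallFeasible_marks hPτ hT hc
  obtain ⟨σ, hσ⟩ := exists_schedule_of_hall τ P (fun X => (hPτ X).le)
    (fun X p => c X / P X + if p ∈ E X then 1 else 0) fun A hA => by
      refine le_trans (sum_le_sum fun X _ => ?_) (hE A hA)
      have hmarked : {p ∈ coveredPeriods (τ X) (range (P X)) A | p ∈ E X} =
          coveredPeriods (τ X) (E X) A := by
        ext p
        simp only [coveredPeriods, mem_filter]
        have := @hEP X p
        tauto
      rw [sum_add_distrib, sum_const, smul_eq_mul, sum_boole, hmarked, mul_comm]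
      exact le_self_add
  exact ⟨σ, fun X => ⟨E X, hEP X, hEc X, hσ X⟩⟩

end Marks

theorem sum_mul_le_sum_mul_of_sum_Icc_le {R : Type*} [CommRing R] [LinearOrder R]
    [IsStrictOrderedRing R] {t : ℕ} {r x y : ℕ → R}
    (hr_nonneg : ∀ i ∈ Icc 1 t, 0 ≤ r i) (hr_anti : AntitoneOn r (Set.Icc 1 t))
    (hxy : ∀ i ∈ Icc 1 t, ∑ j ∈ Icc 1 i, x j ≤ ∑ j ∈ Icc 1 i, y j) :
    ∑ i ∈ Icc 1 t, x i * r i ≤ ∑ i ∈ Icc 1 t, y i * r i := by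
  induction t generalizing r with
  | zero => simp
  | succ t ih =>
    have hlast : t + 1 ∈ Icc 1 (t + 1) := by simp
    -- subtracting the last weight from every weight leaves one term fewer
    have hsplit (z : ℕ → R) : ∑ i ∈ Icc 1 (t + 1), z i * r i =
        ∑ i ∈ Icc 1 t, z i * (r i - r (t + 1)) + (∑ i ∈ Icc 1 (t + 1), z i) * r (t + 1) := by
      simp only [sum_Icc_succ_top (Nat.le_add_left 1 t), mul_sub, sum_sub_distrib, add_mul,
        sum_mul]
      ring
    have hsub : Set.Icc 1 t ⊆ Set.Icc 1 (t + 1) := Set.Icc_subset_Icc_right t.le_succ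
    rw [hsplit x, hsplit y]
    gcongr ?_ + ?_
    · refine ih (fun i hi => sub_nonneg.2 ?_)
        (fun i hi j hj hij => sub_le_sub_right (hr_anti (hsub hi) (hsub hj) hij) _)
        fun i hi => hxy i (by simp only [mem_Icc] at hi ⊢; omega)
      exact hr_anti (hsub (Set.mem_Icc.2 (mem_Icc.1 hi))) (Set.mem_Icc.2 (mem_Icc.1 hlast))
        ((mem_Icc.1 hi).2.trans t.le_succ)
    · exact mul_le_mul_of_nonneg_right (hxy _ hlast) (hr_nonneg _ hlast)

section Counting

variable {ι : Type*} (Q : Finset ι) (ex : ι → ℕ)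

lemma sum_sum_Icc_eq_sum_card_nsmul {M : Type*} [AddCommMonoid M] {t : ℕ}
    (hex : ∀ p ∈ Q, ex p ≤ t) (r : ℕ → M) :
    ∑ p ∈ Q, ∑ i ∈ Icc 1 (ex p), r i = ∑ i ∈ Icc 1 t, #{p ∈ Q | i ≤ ex p} • r i := by
  simp_rw [← sum_const]
  refine sum_comm' fun p i => ?_
  simp only [mem_Icc, mem_filter]
  constructor
  · rintro ⟨hp, h1, hi⟩
    exact ⟨⟨hp, hi⟩, h1, hi.trans (hex p hp)⟩
  · rintro ⟨⟨hp, hi⟩, h1, -⟩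
    exact ⟨hp, h1, hi⟩

lemma sum_Icc_card_le_eq_sum_min (i : ℕ) :
    ∑ j ∈ Icc 1 i, #{p ∈ Q | j ≤ ex p} = ∑ p ∈ Q, min i (ex p) := by
  have h := sum_sum_Icc_eq_sum_card_nsmul Q (fun p => min i (ex p)) (fun _ _ => min_le_left _ _)
    fun _ => 1
  simp only [sum_const, smul_eq_mul, mul_one, Nat.card_Icc, Nat.add_sub_cancel] at h
  rw [h]
  refine sum_congr rfl fun j hj => ?_
  simp only [le_min_iff, (mem_Icc.1 hj).2, true_and]

lemma sum_Icc_le_sum_min_of_balanced {i β : ℕ} {n : ℕ → ℕ} {m : ι → ℕ}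
    (hn : ∀ j ∈ Icc 1 i, n j ≤ #Q)
    (hnm : ∑ j ∈ Icc 1 i, n j ≤ ∑ p ∈ Q, m p)
    (hm : ∀ p ∈ Q, β ≤ m p ∧ m p ≤ β + 1 ∧ m p ≤ ex p) :
    ∑ j ∈ Icc 1 i, n j ≤ ∑ p ∈ Q, min i (ex p) := by
  rcases le_or_gt i β with hiβ | hβi
  · calc ∑ j ∈ Icc 1 i, n j ≤ ∑ _j ∈ Icc 1 i, #Q := sum_le_sum hn
      _ = ∑ _p ∈ Q, i := by simp [mul_comm]
      _ = ∑ p ∈ Q, min i (ex p) := sum_congr rfl fun p hp => by have := hm p hp; omega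
  · exact hnm.trans (sum_le_sum fun p hp => by have := hm p hp; omega)

end Counting

theorem sum_mul_le_sum_sum_Icc_of_balanced {t P : ℕ} {r : ℕ → ℝ} {n ex : ℕ → ℕ} {e : Finset ℕ}
    (hr_nonneg : ∀ i ∈ Icc 1 t, 0 ≤ r i) (hr_anti : AntitoneOn r (Set.Icc 1 t))
    (hn : ∀ i ∈ Icc 1 t, n i ≤ P) (he : e ⊆ range P)
    (he_card : #e = (∑ i ∈ Icc 1 t, n i) % P)
    (hex : ∀ p < P, (∑ i ∈ Icc 1 t, n i) / P + (if p ∈ e then 1 else 0) ≤ ex p ∧ ex p ≤ t) :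
    ∑ i ∈ Icc 1 t, (n i : ℝ) * r i ≤ ∑ p ∈ range P, ∑ i ∈ Icc 1 (ex p), r i := by
  set c := ∑ i ∈ Icc 1 t, n i
  have hm_sum : ∑ p ∈ range P, (c / P + if p ∈ e then 1 else 0) = c := by
    rw [sum_add_distrib, sum_const, card_range, smul_eq_mul, sum_boole, Nat.cast_id,
      filter_mem_eq_inter, inter_eq_right.2 he, he_card, Nat.div_add_mod]
  have hprefix (i : ℕ) (hi : i ∈ Icc 1 t) :
      ∑ j ∈ Icc 1 i, (n j : ℝ) ≤ ∑ j ∈ Icc 1 i, (#{p ∈ range P | j ≤ ex p} : ℝ) := by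
    have hsub : Icc 1 i ⊆ Icc 1 t := Icc_subset_Icc_right (mem_Icc.1 hi).2
    rw_mod_cast [sum_Icc_card_le_eq_sum_min]
    refine sum_Icc_le_sum_min_of_balanced (β := c / P) _ _
      (fun j hj => (card_range P).symm ▸ hn j (hsub hj))
      ((sum_le_sum_of_subset hsub).trans hm_sum.ge) fun p hp => ?_
    have := hex p (mem_range.1 hp)
    split_ifs at this ⊢ <;> omega
  calc ∑ i ∈ Icc 1 t, (n i : ℝ) * r i
      ≤ ∑ i ∈ Icc 1 t, (#{p ∈ range P | i ≤ ex p} : ℝ) * r i :=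
        sum_mul_le_sum_mul_of_sum_Icc_le hr_nonneg hr_anti hprefix
    _ = ∑ p ∈ range P, ∑ i ∈ Icc 1 (ex p), r i := by
        simp_rw [sum_sum_Icc_eq_sum_card_nsmul _ _ (fun p hp => (hex p (mem_range.1 hp)).2),
          nsmul_eq_mul]

end PeriodicSchedule

theorem exists_schedule_of_integer_point_general
    {S : Type*} [Fintype S] [DecidableEq S]
    (τ : S → ℕ) (hτ : ∀ X, 0 < τ X)
    (T : ℕ) (hT : T = Finset.univ.lcm τ)
    (r : S → ℕ → ℝ)
    (hr_nonneg : ∀ X, ∀ i ∈ Finset.Icc 1 (τ X), 0 ≤ r X i)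
    (hr_anti : ∀ X, ∀ i, 1 ≤ i → i + 1 ≤ τ X → r X (i + 1) ≤ r X i)
    (n : S → ℕ → ℕ)
    (hn_le : ∀ X, ∀ i ∈ Finset.Icc 1 (τ X), n X i ≤ T / τ X)
    (hn_sum : ∑ X : S, ∑ i ∈ Finset.Icc 1 (τ X), n X i ≤ T) :
    ∃ σ : ℕ → Option S, ∀ X : S,
      ∑ i ∈ Finset.Icc 1 (τ X), (n X i : ℝ) * r X i ≤
        ∑ p ∈ Finset.range (T / τ X),
          ∑ i ∈ Finset.Icc 1 (execCount τ σ X p), r X i := by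
  have hdvd X : τ X ∣ T := hT ▸ Finset.dvd_lcm (Finset.mem_univ X)
  have hT_pos : 0 < T := Nat.pos_of_ne_zero fun h => by
    obtain ⟨X, -, hX⟩ := Finset.lcm_eq_zero_iff.1 (hT ▸ h)
    exact (hτ X).ne' hX
  obtain ⟨σ, hσ⟩ := PeriodicSchedule.exists_balanced_schedule (P := fun X => T / τ X)
    (fun X => Nat.div_mul_cancel (hdvd X)) hT_pos hn_sum
  refine ⟨σ, fun X => ?_⟩
  obtain ⟨e, he, he_card, hbal⟩ := hσ X
  have hr_antiOn : AntitoneOn (r X) (Set.Icc 1 (τ X)) :=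
    antitoneOn_of_succ_le Set.ordConnected_Icc fun i _ hi hi' => hr_anti X i hi.1 hi'.2
  exact PeriodicSchedule.sum_mul_le_sum_sum_Icc_of_balanced (hr_nonneg X) hr_antiOn (hn_le X) he
    he_card fun p hp => ⟨hbal p hp, PeriodicSchedule.execCount_le τ σ X p⟩

/-- Theorem 3 of the paper.  If `n_X^i` are nonnegative
integers with `n_X^i ≤ T/τ_X` and `Σ_X Σ_i n_X^i ≤ T`, then there is a
schedule of one frame under which every task `X` earns reward at least
`Σ_{i=1}^{τ_X} n_X^i r_X^i`. -/
theorem exists_schedule_of_integer_point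
    {S : Type*} [Fintype S] [Nonempty S] [DecidableEq S]
    (τ : S → ℕ) (hτ : ∀ X, 0 < τ X)
    (T : ℕ) (hT : T = Finset.univ.lcm τ)
    (r : S → ℕ → ℝ)
    (hr_nonneg : ∀ X, ∀ i ∈ Finset.Icc 1 (τ X), 0 ≤ r X i)
    (hr_anti : ∀ X, ∀ i, 1 ≤ i → i + 1 ≤ τ X → r X (i + 1) ≤ r X i)
    (n : S → ℕ → ℕ)
    (hn_le : ∀ X, ∀ i ∈ Finset.Icc 1 (τ X), n X i ≤ T / τ X)
    (hn_sum : ∑ X : S, ∑ i ∈ Finset.Icc 1 (τ X), n X i ≤ T) :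
    ∃ σ : ℕ → Option S, ∀ X : S,
      ∑ i ∈ Finset.Icc 1 (τ X), (n X i : ℝ) * r X i ≤
        ∑ p ∈ Finset.range (T / τ X),
          ∑ i ∈ Finset.Icc 1 (execCount τ σ X p), r X i :=
  exists_schedule_of_integer_point_general τ hτ T hT r hr_nonneg hr_anti n hn_le hn_sum
end

section
/- For every greedy frame schedule σ_GM and every frame schedule σ, Σ_{X∈S} d_X R_X(σ_GM) ≥ (1/2) Σ_{X∈S} d_X R_X(σ). That is, the greedy schedule earns at least half of the maximum achievable debt-weighted reward in each frame (hence the Greedy Maximizer is a 2-approximation policy). -/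
/-- The reward of task `X` under a frame schedule `σ`:
`R_X(σ) = Σ_{p=0}^{T/τ_X − 1} Σ_{i=1}^{m_X(p)} r_X^i`. -/
def reward {S : Type*} [DecidableEq S] (τ : S → ℕ) (T : ℕ) (r : S → ℕ → ℝ)
    (σ : ℕ → Option S) (X : S) : ℝ :=
  ∑ p ∈ Finset.range (T / τ X), ∑ i ∈ Finset.Icc 1 (execCount τ σ X p), r X i

/-- The number of executions of `Y` before slot `t` in the current period of
`Y` containing `t`, i.e. `#{t' ∈ [⌊t/τ_Y⌋·τ_Y, t) : σ(t') = Y}`. -/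
def execsSoFar {S : Type*} [DecidableEq S] (τ : S → ℕ) (σ : ℕ → Option S)
    (Y : S) (t : ℕ) : ℕ :=
  ((Finset.Ico ((t / τ Y) * τ Y) t).filter (fun t' => σ t' = some Y)).card

open Finset

theorem Finset.sum_card_filter_lt {α M : Type*} [LinearOrder α] [AddCommMonoid M]
    (s : Finset α) (f : ℕ → M) :
    ∑ t ∈ s, f #{u ∈ s | u < t} = ∑ i ∈ range #s, f i := by
  classical
  induction s using Finset.induction_on_max with
  | empty => simp
  | insert a s ha ih =>
    have ha' : a ∉ s := fun h => lt_irrefl a (ha a h)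
    have h_top : {u ∈ insert a s | u < a} = s := by
      rw [filter_insert, if_neg (lt_irrefl a), filter_true_of_mem ha]
    have h_below : ∀ t ∈ s, {u ∈ insert a s | u < t} = {u ∈ s | u < t} := fun t ht => by
      rw [filter_insert, if_neg (not_lt.2 (ha t ht).le)]
    rw [sum_insert ha', h_top, sum_congr rfl fun t ht => by rw [h_below t ht], ih, card_insert_of_notMem ha',
      sum_range_succ, add_comm]

theorem Finset.sum_range_mul_eq_sum_Ico {M : Type*} [AddCommMonoid M] (f : ℕ → M) (q c : ℕ) :
    ∑ t ∈ range (q * c), f t = ∑ p ∈ range q, ∑ t ∈ Ico (p * c) ((p + 1) * c), f t := by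
  induction q with
  | zero => simp
  | succ q ih =>
    rw [sum_range_succ, ← ih, range_eq_Ico, range_eq_Ico,
      sum_Ico_consecutive _ (Nat.zero_le _) (Nat.mul_le_mul_right c q.le_succ)]

namespace FrameSchedule

variable {S : Type*} [DecidableEq S] (τ : S → ℕ) (σ : ℕ → Option S)

def execSlots (X : S) (p : ℕ) : Finset ℕ :=
  {t ∈ Ico (p * τ X) ((p + 1) * τ X) | σ t = some X}

variable {τ σ}

theorem div_eq_of_mem_execSlots {X : S} {p t : ℕ} (h : t ∈ execSlots τ σ X p) : t / τ X = p := by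
  simp only [execSlots, mem_filter, mem_Ico] at h
  exact Nat.div_eq_of_lt_le h.1.1 h.1.2

theorem execsSoFar_eq_card_of_mem_execSlots {X : S} {p t : ℕ} (h : t ∈ execSlots τ σ X p) :
    execsSoFar τ σ X t = #{u ∈ execSlots τ σ X p | u < t} := by
  have ht : t < (p + 1) * τ X := (mem_Ico.1 (mem_filter.1 h).1).2
  rw [execsSoFar, div_eq_of_mem_execSlots h]
  congr 1
  ext u
  simp only [execSlots, mem_filter, mem_Ico]
  constructor
  · rintro ⟨⟨hpu, hut⟩, hσ⟩
    exact ⟨⟨⟨hpu, hut.trans ht⟩, hσ⟩, hut⟩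
  · rintro ⟨⟨⟨hpu, -⟩, hσ⟩, hut⟩
    exact ⟨⟨hpu, hut⟩, hσ⟩

theorem execsSoFar_le_execCount (hτ : ∀ X, 0 < τ X) (X : S) (t : ℕ) :
    execsSoFar τ σ X t ≤ execCount τ σ X (t / τ X) := by
  refine card_le_card (filter_subset_filter _ (Ico_subset_Ico le_rfl ?_))
  rw [add_one_mul]
  exact (Nat.lt_div_mul_add (hτ X)).le

theorem sum_execSlots {M : Type*} [AddCommMonoid M] (G : ℕ → ℕ → M) (X : S) (p : ℕ) :
    ∑ t ∈ execSlots τ σ X p, G (t / τ X) (execsSoFar τ σ X t + 1) =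
      ∑ k ∈ Icc 1 (execCount τ σ X p), G p k := by
  rw [sum_congr rfl fun t ht => by
      rw [div_eq_of_mem_execSlots ht, execsSoFar_eq_card_of_mem_execSlots ht],
    sum_card_filter_lt (execSlots τ σ X p) (fun i => G p (i + 1)),
    ← Ico_add_one_right_eq_Icc, sum_Ico_eq_sum_range]
  simp only [add_tsub_cancel_right, add_comm 1]
  rfl

theorem sum_range_filter_eq_sum_execCount {M : Type*} [AddCommMonoid M] {T : ℕ} {X : S}
    (hX : τ X ∣ T) (G : ℕ → ℕ → M) :
    ∑ t ∈ range T with σ t = some X, G (t / τ X) (execsSoFar τ σ X t + 1) =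
      ∑ p ∈ range (T / τ X), ∑ k ∈ Icc 1 (execCount τ σ X p), G p k := by
  conv_lhs => rw [← Nat.div_mul_cancel hX, sum_filter, sum_range_mul_eq_sum_Ico]
  simp only [← sum_filter]
  exact sum_congr rfl fun p _ => sum_execSlots G X p

variable (τ σ)

/-- `F X p k` is what the `k`-th execution of `X` in its `p`-th period earns. -/
def slotGain (F : S → ℕ → ℕ → ℝ) (t : ℕ) : ℝ :=
  (σ t).elim 0 fun X => F X (t / τ X) (execsSoFar τ σ X t + 1)

def frameValue [Fintype S] (T : ℕ) (w : S → ℕ → ℝ) : ℝ :=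
  ∑ X, ∑ p ∈ range (T / τ X), ∑ k ∈ Icc 1 (execCount τ σ X p), w X k

def cappedWeight (w : S → ℕ → ℝ) (X : S) (p k : ℕ) : ℝ :=
  if k ≤ execCount τ σ X p then w X k else 0

variable {τ σ}

theorem sum_slotGain [Fintype S] {T : ℕ} (hdvd : ∀ X, τ X ∣ T) (F : S → ℕ → ℕ → ℝ) :
    ∑ t ∈ range T, slotGain τ σ F t =
      ∑ X, ∑ p ∈ range (T / τ X), ∑ k ∈ Icc 1 (execCount τ σ X p), F X p k := by
  have h_split : ∀ t, slotGain τ σ F t =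
      ∑ X, if σ t = some X then F X (t / τ X) (execsSoFar τ σ X t + 1) else 0 := fun t => by
    cases h : σ t <;> simp [slotGain, h]
  simp only [h_split]
  rw [sum_comm]
  exact sum_congr rfl fun X _ => by
    rw [← sum_filter, sum_range_filter_eq_sum_execCount (hdvd X)]

theorem sum_slotGain_eq_frameValue [Fintype S] {T : ℕ} (hdvd : ∀ X, τ X ∣ T) (w : S → ℕ → ℝ) :
    ∑ t ∈ range T, slotGain τ σ (fun X _ k => w X k) t = frameValue τ σ T w :=
  sum_slotGain hdvd _

theorem sum_slotGain_cappedWeight_le [Fintype S] {T : ℕ} (hdvd : ∀ X, τ X ∣ T)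
    {w : S → ℕ → ℝ} (hw : ∀ X k, 0 ≤ w X k) (σ' : ℕ → Option S) :
    ∑ t ∈ range T, slotGain τ σ' (cappedWeight τ σ w) t ≤ frameValue τ σ T w := by
  rw [sum_slotGain hdvd]
  refine sum_le_sum fun X _ => sum_le_sum fun p _ => ?_
  simp only [cappedWeight]
  rw [sum_ite, sum_const_zero, add_zero]
  refine sum_le_sum_of_subset_of_nonneg (fun k hk => ?_) fun k _ _ => hw X k
  simp only [mem_filter, mem_Icc] at hk ⊢
  exact ⟨hk.1.1, hk.2⟩

theorem slotGain_le_add_of_greedy (hτ : ∀ X, 0 < τ X) {w : S → ℕ → ℝ}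
    (hw_nonneg : ∀ X k, 0 ≤ w X k) (hw_anti : ∀ X, AntitoneOn (w X) (Set.Ici 1))
    {σGM : ℕ → Option S} {t : ℕ} {Y : S} (hY : σGM t = some Y)
    (hmax : ∀ Z, w Z (execsSoFar τ σGM Z t + 1) ≤ w Y (execsSoFar τ σGM Y t + 1)) :
    slotGain τ σ (fun X _ k => w X k) t ≤
      slotGain τ σGM (fun X _ k => w X k) t + slotGain τ σ (cappedWeight τ σGM w) t := by
  have h_greedy : slotGain τ σGM (fun X _ k => w X k) t = w Y (execsSoFar τ σGM Y t + 1) := by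
    simp [slotGain, hY]
  rw [h_greedy]
  cases hσ : σ t with
  | none => simpa [slotGain, hσ] using hw_nonneg Y _
  | some Z =>
    simp only [slotGain, hσ, Option.elim_some, cappedWeight]
    split_ifs with h_capped
    · linarith [hw_nonneg Y (execsSoFar τ σGM Y t + 1)]
    · have h_count := execsSoFar_le_execCount (σ := σGM) hτ Z t
      have h_mono : w Z (execsSoFar τ σ Z t + 1) ≤ w Z (execsSoFar τ σGM Z t + 1) :=
        hw_anti Z (Set.mem_Ici.2 (by omega)) (Set.mem_Ici.2 (by omega)) (by omega)
      linarith [hmax Z]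

theorem frameValue_le_two_mul_of_greedy [Fintype S] (hτ : ∀ X, 0 < τ X) {T : ℕ}
    (hdvd : ∀ X, τ X ∣ T) {w : S → ℕ → ℝ} (hw_nonneg : ∀ X k, 0 ≤ w X k)
    (hw_anti : ∀ X, AntitoneOn (w X) (Set.Ici 1)) {σGM : ℕ → Option S}
    (hgreedy : ∀ t < T, ∃ Y, σGM t = some Y ∧
      ∀ Z, w Z (execsSoFar τ σGM Z t + 1) ≤ w Y (execsSoFar τ σGM Y t + 1))
    (σ : ℕ → Option S) :
    frameValue τ σ T w ≤ 2 * frameValue τ σGM T w := by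
  have h_slot : ∀ t ∈ range T, slotGain τ σ (fun X _ k => w X k) t ≤
      slotGain τ σGM (fun X _ k => w X k) t + slotGain τ σ (cappedWeight τ σGM w) t :=
    fun t ht => by
      obtain ⟨Y, hY, hmax⟩ := hgreedy t (mem_range.1 ht)
      exact slotGain_le_add_of_greedy hτ hw_nonneg hw_anti hY hmax
  calc frameValue τ σ T w
      = ∑ t ∈ range T, slotGain τ σ (fun X _ k => w X k) t :=
        (sum_slotGain_eq_frameValue hdvd w).symm
    _ ≤ frameValue τ σGM T w + ∑ t ∈ range T, slotGain τ σ (cappedWeight τ σGM w) t := by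
        rw [← sum_slotGain_eq_frameValue hdvd w, ← sum_add_distrib]
        exact sum_le_sum h_slot
    _ ≤ frameValue τ σGM T w + frameValue τ σGM T w :=
        add_le_add_right (sum_slotGain_cappedWeight_le hdvd hw_nonneg σ) _
    _ = 2 * frameValue τ σGM T w := by ring

theorem sum_mul_reward_eq_frameValue [Fintype S] (T : ℕ) (r : S → ℕ → ℝ) (d : S → ℝ) :
    ∑ X, d X * reward τ T r σ X = frameValue τ σ T fun X k => d X * r X k := by
  simp only [reward, frameValue, mul_sum]

end FrameSchedule

open FrameSchedule in
theorem greedy_frame_schedule_two_approx_general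
    {S : Type*} [Fintype S] [DecidableEq S]
    (τ : S → ℕ) (hτ : ∀ X, 0 < τ X)
    (T : ℕ) (hT : T = Finset.univ.lcm τ)
    (r : S → ℕ → ℝ)
    (hr_nonneg : ∀ X i, 0 ≤ r X i)
    (hr_anti : ∀ X i, 1 ≤ i → r X (i + 1) ≤ r X i)
    (d : S → ℝ) (hd : ∀ X, 0 ≤ d X)
    (σGM : ℕ → Option S)
    (hgreedy : ∀ t : ℕ, t < T → ∃ Y : S, σGM t = some Y ∧
      ∀ Z : S, d Z * r Z (execsSoFar τ σGM Z t + 1) ≤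
        d Y * r Y (execsSoFar τ σGM Y t + 1)) :
    ∀ σ : ℕ → Option S,
      (1 / 2) * ∑ X : S, d X * reward τ T r σ X ≤
        ∑ X : S, d X * reward τ T r σGM X := by
  intro σ
  have hdvd : ∀ X, τ X ∣ T := fun X => hT ▸ dvd_lcm (mem_univ X)
  have hw_anti : ∀ X, AntitoneOn (fun k => d X * r X k) (Set.Ici 1) := fun X _ hi _ hj hij =>
    mul_le_mul_of_nonneg_left (antitoneOn_nat_Ici_of_succ_le (hr_anti X) hi hj hij) (hd X)
  have h := frameValue_le_two_mul_of_greedy hτ hdvd (fun X k => mul_nonneg (hd X) (hr_nonneg X k))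
    hw_anti hgreedy σ
  rw [sum_mul_reward_eq_frameValue, sum_mul_reward_eq_frameValue]
  linarith

/-- Theorem 9.  Every greedy frame schedule earns at least
half of the debt-weighted reward of any frame schedule; hence the Greedy
Maximizer is a 2-approximation policy. -/
theorem greedy_frame_schedule_two_approx
    {S : Type*} [Fintype S] [Nonempty S] [DecidableEq S]
    (τ : S → ℕ) (hτ : ∀ X, 0 < τ X)
    (T : ℕ) (hT : T = Finset.univ.lcm τ)
    (r : S → ℕ → ℝ)
    (hr_nonneg : ∀ X i, 0 ≤ r X i)
    (hr_anti : ∀ X i, 1 ≤ i → r X (i + 1) ≤ r X i)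
    (hr_ext : ∀ X i, τ X < i → r X i = 0)
    (d : S → ℝ) (hd : ∀ X, 0 ≤ d X)
    (σGM : ℕ → Option S)
    (hgreedy : ∀ t : ℕ, t < T → ∃ Y : S, σGM t = some Y ∧
      ∀ Z : S, d Z * r Z (execsSoFar τ σGM Z t + 1) ≤
        d Y * r Y (execsSoFar τ σGM Y t + 1)) :
    ∀ σ : ℕ → Option S,
      (1 / 2) * ∑ X : S, d X * reward τ T r σ X ≤
        ∑ X : S, d X * reward τ T r σGM X :=
  greedy_frame_schedule_two_approx_general τ hτ T hT r hr_nonneg hr_anti d hd σGM hgreedy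
end
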